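/- For -1 < a < 1, ∫₀¹ log(x)/(x²-2ax+1) dx = -∑_{k=0}^∞ U_k(a)/(k+1)². -/

import Mathlib

/-!
For `|a| < 1` the Chebyshev polynomials of the second kind are bounded at `a` by `1 / √(1 - a²)`
(since `U_k(cos θ) sin θ = sin((k + 1) θ)`), and their recurrence shows that
`∑ U_k(a) x^k = 1 / (x² - 2 a x + 1)` for `|x| < 1`. Expanding the integrand into this series and
integrating term by term with `∫₀¹ x^k log x dx = -1 / (k + 1)²` gives the formula; the interchange
is justified because `∑ |U_k(a)| / (k + 1)²` converges.
-/

open Real MeasureTheory Set Polynomial Polynomial.Chebyshev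

theorem intervalIntegrable_pow_mul_log (n : ℕ) {a b : ℝ} :
    IntervalIntegrable (fun x => x ^ n * log x) volume a b :=
  intervalIntegral.intervalIntegrable_log'.continuousOn_mul (continuous_pow n).continuousOn

theorem integral_pow_mul_log (n : ℕ) :
    ∫ x in (0 : ℝ)..1, x ^ n * log x = -1 / ((n : ℝ) + 1) ^ 2 := by
  have hn : (n : ℝ) + 1 ≠ 0 := by positivity
  let F : ℝ → ℝ := fun x => x ^ (n + 1) * log x / (n + 1) - x ^ (n + 1) / (n + 1) ^ 2
  have hF : ∀ x ∈ Ioo (0 : ℝ) 1, HasDerivAt F (x ^ n * log x) x := by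
    intro x hx
    have hx₀ : x ≠ 0 := hx.1.ne'
    refine ((((hasDerivAt_pow (n + 1) x).mul (hasDerivAt_log hx₀)).div_const ((n : ℝ) + 1)).sub
      ((hasDerivAt_pow (n + 1) x).div_const (((n : ℝ) + 1) ^ 2))).congr_deriv ?_
    field_simp
    push_cast
    ring
  have hcont : ContinuousOn F (Icc 0 1) := by
    -- continuity at `0` comes from that of `x log x`
    have : F = fun x => x ^ n * (x * log x) / (n + 1) - x ^ (n + 1) / (n + 1) ^ 2 := by
      funext x; ring
    rw [this]
    fun_prop
  rw [intervalIntegral.integral_eq_sub_of_hasDerivAt_of_le zero_le_one hcont hF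
    (intervalIntegrable_pow_mul_log n)]
  simp [F]
  ring

theorem summable_one_div_nat_add_one_sq : Summable fun k : ℕ => 1 / ((k : ℝ) + 1) ^ 2 := by
  simpa using (summable_nat_add_iff 1).2 (Real.summable_one_div_nat_pow.2 one_lt_two)

theorem integral_tsum_mul_pow_mul_log {c : ℕ → ℝ} {C : ℝ} (hc : ∀ k, |c k| ≤ C) :
    ∫ x in (0 : ℝ)..1, (∑' k, c k * x ^ k) * log x = -∑' k, c k / ((k : ℝ) + 1) ^ 2 := by
  have hI : ∀ k : ℕ, ∫ x in Ioc (0 : ℝ) 1, x ^ k * log x = -1 / ((k : ℝ) + 1) ^ 2 := fun k => by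
    rw [← intervalIntegral.integral_of_le zero_le_one, integral_pow_mul_log]
  have hint : ∀ k : ℕ, Integrable (fun x => c k * (x ^ k * log x)) (volume.restrict (Ioc 0 1)) :=
    fun k => ((intervalIntegrable_pow_mul_log k).const_mul (c k)).1
  have hnorm : ∀ k : ℕ,
      ∫ x in Ioc (0 : ℝ) 1, ‖c k * (x ^ k * log x)‖ = |c k| / ((k : ℝ) + 1) ^ 2 := by
    intro k
    have hpt : EqOn (fun x => ‖c k * (x ^ k * log x)‖) (fun x => |c k| * -(x ^ k * log x))
        (Ioc 0 1) := fun x hx => by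
      dsimp only
      rw [norm_mul, Real.norm_eq_abs, Real.norm_eq_abs,
        abs_of_nonpos (mul_nonpos_of_nonneg_of_nonpos (pow_nonneg hx.1.le k)
          (log_nonpos hx.1.le hx.2))]
    rw [setIntegral_congr_fun measurableSet_Ioc hpt, integral_const_mul, integral_neg, hI]
    ring
  have hsum : Summable fun k : ℕ => ∫ x in Ioc (0 : ℝ) 1, ‖c k * (x ^ k * log x)‖ := by
    simp only [hnorm]
    refine (summable_one_div_nat_add_one_sq.mul_left C).of_nonneg_of_le (fun k => by positivity)
      fun k => ?_
    rw [mul_one_div]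
    gcongr
    exact hc k
  calc ∫ x in (0 : ℝ)..1, (∑' k, c k * x ^ k) * log x
      = ∫ x in Ioc (0 : ℝ) 1, ∑' k, c k * (x ^ k * log x) := by
        rw [intervalIntegral.integral_of_le zero_le_one]
        simp only [← tsum_mul_right, mul_assoc]
    _ = ∑' k, ∫ x in Ioc (0 : ℝ) 1, c k * (x ^ k * log x) :=
        (integral_tsum_of_summable_integral_norm hint hsum).symm
    _ = -∑' k, c k / ((k : ℝ) + 1) ^ 2 := by
        rw [← tsum_neg]
        congr 1
        funext k
        rw [integral_const_mul, hI]
        ring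

theorem abs_eval_U_real_mul_sqrt_le_one (n : ℤ) {x : ℝ} (hx : |x| ≤ 1) :
    |(U ℝ n).eval x| * √(1 - x ^ 2) ≤ 1 := by
  obtain ⟨hx₁, hx₂⟩ := abs_le.1 hx
  have h := U_real_cos (arccos x) n
  rw [cos_arccos hx₁ hx₂, sin_arccos] at h
  rw [← abs_of_nonneg (sqrt_nonneg (1 - x ^ 2)), ← abs_mul, h]
  exact abs_sin_le_one _

theorem abs_eval_U_real_le_inv_sqrt (n : ℤ) {x : ℝ} (hx : |x| < 1) :
    |(U ℝ n).eval x| ≤ (√(1 - x ^ 2))⁻¹ := by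
  have hpos : 0 < √(1 - x ^ 2) := sqrt_pos.2 (by nlinarith [abs_lt.1 hx, sq_abs x])
  rw [← one_div, le_div_iff₀ hpos]
  exact abs_eval_U_real_mul_sqrt_le_one n hx.le

theorem summable_U_eval_mul_pow {a x : ℝ} (ha : |a| < 1) (hx : |x| < 1) :
    Summable fun k : ℕ => (U ℝ k).eval a * x ^ k := by
  refine ((summable_geometric_of_lt_one (abs_nonneg x) hx).mul_left
    (√(1 - a ^ 2))⁻¹).of_norm_bounded fun k => ?_
  rw [norm_mul, norm_pow, Real.norm_eq_abs, Real.norm_eq_abs]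
  exact mul_le_mul_of_nonneg_right (abs_eval_U_real_le_inv_sqrt k ha) (by positivity)

theorem hasSum_U_eval_mul_pow {K : Type*} [Field K] [TopologicalSpace K] [IsTopologicalRing K]
    [T2Space K] {a x : K} (h : Summable fun k : ℕ => (U K k).eval a * x ^ k) :
    HasSum (fun k : ℕ => (U K k).eval a * x ^ k) (x ^ 2 - 2 * a * x + 1)⁻¹ := by
  set f : ℕ → K := fun k => (U K k).eval a * x ^ k
  obtain ⟨S, hS⟩ := h
  have hrec : ∀ k : ℕ, f (k + 2) = 2 * a * x * f (k + 1) - x ^ 2 * f k := by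
    intro k
    simp only [f, Nat.cast_add, Nat.cast_ofNat, Nat.cast_one, U_add_two, eval_sub, eval_mul,
      eval_ofNat, eval_X]
    ring
  have hf₀ : f 0 = 1 := by simp [f]
  have hf₁ : f 1 = 2 * a * x := by simp [f]
  have h₁ : HasSum (fun k => f (k + 1)) (S - 1) := by
    simpa [hf₀] using (hasSum_nat_add_iff' 1).2 hS
  have h₂ : HasSum (fun k => f (k + 2)) (S - (1 + 2 * a * x)) := by
    simpa [Finset.sum_range_succ, hf₀, hf₁] using (hasSum_nat_add_iff' 2).2 hS
  have h₂' : HasSum (fun k => f (k + 2)) (2 * a * x * (S - 1) - x ^ 2 * S) := by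
    simpa only [hrec] using (h₁.mul_left (2 * a * x)).sub (hS.mul_left (x ^ 2))
  have hS' : (x ^ 2 - 2 * a * x + 1) * S = 1 := by
    linear_combination -(h₂'.unique h₂)
  rwa [← eq_inv_of_mul_eq_one_right hS']

theorem stmt9 (a : ℝ) (ha : -1 < a) (ha' : a < 1) :
    ∫ x in (0:ℝ)..1, Real.log x / (x ^ 2 - 2 * a * x + 1) =
      -∑' k : ℕ, (Polynomial.Chebyshev.U ℝ k).eval a / ((k : ℝ) + 1) ^ 2 := by
  have ha₁ : |a| < 1 := abs_lt.2 ⟨ha, ha'⟩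
  rw [← integral_tsum_mul_pow_mul_log fun k => abs_eval_U_real_le_inv_sqrt k ha₁]
  refine intervalIntegral.integral_congr fun x hx => ?_
  rw [uIcc_of_le zero_le_one] at hx
  rcases hx.2.eq_or_lt with rfl | hx₁
  · -- the series need not converge at `x = 1`, but `log 1 = 0`
    simp
  · have hx : |x| < 1 := abs_lt.2 ⟨by linarith [hx.1], hx₁⟩
    simp only [(hasSum_U_eval_mul_pow (summable_U_eval_mul_pow ha₁ hx)).tsum_eq, div_eq_inv_mul]
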